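/- Let n ≥ 2, λ > 0, C₀ > 0, and define w(x,t) := C₀ g(|x| - r(t)) with r(t) := 1 - C₀ λ t and g(s) := (1 - e^{-2ns})/(2n) for s > 0, g(s)=0 for s ≤ 0. Then at every point (x,t) with t ∈ [0,1], r(t) ≥ 1/2, and |x| > r(t) (so w is positive and smooth there), one has w_t ≥ 0 and Δw < 0, where Δ is the spatial Laplacian; in particular w_t ≥ Δw in the positivity set. Moreover on the free boundary {|x| = r(t)} one has, taking one-sided derivatives from the region |x| > r(t), w_t = λ C₀² = λ |∇w|². -/

import Mathlib

open Real Set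

noncomputable section

abbrev E (n : ℕ) := EuclideanSpace ℝ (Fin n)

/-!
The profile `g` has `g' = e^{-2ns}` and `g'' = -2n g'` for `s > 0`, so the radial Laplacian is
`C₀ g' (-2n + (n-1)/|x|)`, which is negative as soon as `|x| > 1/2`. Since the front `r` recedes at
speed `C₀λ`, the chain rule gives `w_t = C₀²λ g' ≥ 0`. At the front the argument of `g` is `0`,
where `g` has right derivative `g'(0) = 1`, which gives the free-boundary condition.
-/

def expProfile (N s : ℝ) : ℝ := (1 - exp (-N * s)) / N

lemma expProfile_zero (N : ℝ) : expProfile N 0 = 0 := by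
  simp [expProfile]

lemma hasDerivAt_expProfile {N : ℝ} (hN : N ≠ 0) (s : ℝ) :
    HasDerivAt (expProfile N) (exp (-N * s)) s := by
  have h := ((((hasDerivAt_id s).const_mul (-N)).exp).const_sub 1).div_const N
  refine h.congr_deriv ?_
  simp only [id, mul_one]
  field_simp

section Truncation

variable {f g : ℝ → ℝ} (hg : ∀ s, g s = if s ≤ 0 then 0 else f s)
include hg

lemma hasDerivAt_of_truncation_of_pos {f' s : ℝ} (hs : 0 < s) (hf : HasDerivAt f f' s) :
    HasDerivAt g f' s := by
  refine hf.congr_of_eventuallyEq ?_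
  filter_upwards [eventually_gt_nhds hs] with u hu
  rw [hg, if_neg hu.not_ge]

lemma hasDerivWithinAt_Ici_zero_of_truncation {f' : ℝ} (hf0 : f 0 = 0)
    (hf : HasDerivAt f f' 0) : HasDerivWithinAt g f' (Ici 0) 0 := by
  have hfg : EqOn g f (Ici 0) := by
    intro u hu
    rcases (mem_Ici.mp hu).eq_or_lt with rfl | hu
    · rw [hg, if_pos le_rfl, hf0]
    · rw [hg, if_neg hu.not_ge]
  exact hf.hasDerivWithinAt.congr hfg (hfg self_mem_Ici)

end Truncation

section Front

variable {r : ℝ → ℝ} {v : ℝ} (hr : ∀ t, r t = 1 - v * t)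
include hr

lemma hasDerivAt_sub_front (ρ t : ℝ) : HasDerivAt (fun s => ρ - r s) v t := by
  have h : HasDerivAt (fun s => ρ - 1 + v * s) v t := by
    simpa using ((hasDerivAt_id t).const_mul v).const_add (ρ - 1)
  have hfun : (fun s => ρ - r s) = fun s => ρ - 1 + v * s := funext fun s => by rw [hr]; ring
  rwa [hfun]

lemma mapsTo_sub_front_Ici (hv : 0 ≤ v) {ρ t : ℝ} (hρ : ρ = r t) :
    MapsTo (fun s => ρ - r s) (Ici t) (Ici 0) := by
  intro s hs
  simp only [mem_Ici, hρ, hr] at hs ⊢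
  nlinarith

end Front

lemma radial_laplacian_neg {n a C e : ℝ} (hn : 0 ≤ n) (ha : 1 / 2 < a) (hC : 0 < C)
    (he : 0 < e) : C * (-(2 * n) * e + ((n - 1) / a) * e) < 0 := by
  have hcoeff : (n - 1) / a < 2 * n := by
    rw [div_lt_iff₀ (by linarith)]
    nlinarith
  exact mul_neg_of_pos_of_neg hC (by nlinarith)

/-- `w(x,t) = C₀ g(|x| - r(t))` with `r(t) = 1 - C₀λt` and
`g(s) = (1-e^{-2ns})/(2n)` for `s > 0`, `g(s) = 0` for `s ≤ 0`, is a
supersolution of the rescaled Stefan problem: in the positivity set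
(`t ∈ [0,1]`, `r(t) ≥ 1/2`, `|x| > r(t)`) one has `w_t ≥ 0`, the radial
Laplacian `Δw = C₀(g'' + (n-1)/|x| g')` is negative, hence `Δw ≤ w_t`;
and on the free boundary `{|x| = r(t)}` the one-sided derivatives satisfy
`w_t = λC₀² = λ|∇w|²` with `|∇w| = C₀`. -/
theorem radial_supersolution (n : ℕ) (hn : 2 ≤ n) (lam C0 : ℝ)
    (hlam : 0 < lam) (hC0 : 0 < C0)
    (g : ℝ → ℝ)
    (hg : ∀ s : ℝ, g s = if s ≤ 0 then 0 else (1 - Real.exp (-(2 * (n : ℝ)) * s)) / (2 * (n : ℝ)))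
    (r : ℝ → ℝ) (hr : ∀ t, r t = 1 - C0 * lam * t)
    (w : E n → ℝ → ℝ) (hw : ∀ x t, w x t = C0 * g (‖x‖ - r t)) :
    (∀ (x : E n) (t : ℝ), t ∈ Set.Icc (0 : ℝ) 1 → (1 : ℝ) / 2 ≤ r t → r t < ‖x‖ →
      HasDerivAt (fun s => w x s) (C0 ^ 2 * lam * Real.exp (-(2 * (n : ℝ)) * (‖x‖ - r t))) t ∧
      0 ≤ C0 ^ 2 * lam * Real.exp (-(2 * (n : ℝ)) * (‖x‖ - r t)) ∧
      C0 * ((-(2 * (n : ℝ))) * Real.exp (-(2 * (n : ℝ)) * (‖x‖ - r t))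
          + (((n : ℝ) - 1) / ‖x‖) * Real.exp (-(2 * (n : ℝ)) * (‖x‖ - r t))) < 0 ∧
      C0 * ((-(2 * (n : ℝ))) * Real.exp (-(2 * (n : ℝ)) * (‖x‖ - r t))
          + (((n : ℝ) - 1) / ‖x‖) * Real.exp (-(2 * (n : ℝ)) * (‖x‖ - r t)))
        ≤ C0 ^ 2 * lam * Real.exp (-(2 * (n : ℝ)) * (‖x‖ - r t))) ∧
    (∀ (x : E n) (t : ℝ), t ∈ Set.Icc (0 : ℝ) 1 → (1 : ℝ) / 2 ≤ r t → ‖x‖ = r t →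
      HasDerivWithinAt (fun s => w x s) (lam * C0 ^ 2) (Set.Ici t) t ∧
      HasDerivWithinAt (fun ρ : ℝ => C0 * g ρ) C0 (Set.Ici 0) 0 ∧
      lam * C0 ^ 2 = lam * C0 ^ 2) := by
  have hN : (2 * n : ℝ) ≠ 0 := by positivity
  have hg_profile : ∀ s, g s = if s ≤ 0 then 0 else expProfile (2 * n) s := hg
  have hw_fun : ∀ x, (fun s => w x s) = fun s => C0 * g (‖x‖ - r s) :=
    fun x => funext (hw x)
  have hg_right : HasDerivWithinAt g 1 (Ici 0) 0 := by
    simpa using hasDerivWithinAt_Ici_zero_of_truncation hg_profile (expProfile_zero _)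
      (hasDerivAt_expProfile hN 0)
  refine ⟨fun x t _ hrt hx => ?_, fun x t _ _ hx => ?_⟩
  · have hg_deriv := hasDerivAt_of_truncation_of_pos hg_profile (sub_pos.mpr hx)
      (hasDerivAt_expProfile hN _)
    have hwt := (hg_deriv.comp t (hasDerivAt_sub_front hr ‖x‖ t)).const_mul C0
    have hΔ := radial_laplacian_neg (n := (n : ℝ)) (by positivity) (hrt.trans_lt hx) hC0
      (exp_pos (-(2 * n) * (‖x‖ - r t)))
    refine ⟨?_, by positivity, hΔ, hΔ.le.trans (by positivity)⟩
    rw [hw_fun]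
    exact hwt.congr_deriv (by ring)
  · have hg_front : HasDerivWithinAt g 1 (Ici 0) (‖x‖ - r t) := by rwa [hx, sub_self]
    have hwt := (hg_front.comp t (hasDerivAt_sub_front hr ‖x‖ t).hasDerivWithinAt
      (mapsTo_sub_front_Ici hr (by positivity) hx)).const_mul C0
    refine ⟨?_, by simpa using hg_right.const_mul C0, rfl⟩
    rw [hw_fun]
    exact hwt.congr_deriv (by ring)
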